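/- Let α > 0, θ ∈ ℝ, and β < 1. If the Archimedean spiral lattice Γ_{α,θ} is asymptotically β-uniformly discrete, then 1 + 2αβ ≤ 2α. -/

import Mathlib

/-! By Dirichlet's theorem some `0 < q ≤ N` has `qθ` within `1 / (N + 1)` of an integer, so the
lattice points of index `N²` and `N² + q` have almost the same argument, and moduli `N^(2α)` and
`N^(2α) + O(N^(2α - 1))`. They are therefore at distance `O(N^(2α - 1))`, while the discreteness
radius around the first one is `s₁ N^(2αβ)`. If `2α - 1 < 2αβ`, two distinct lattice points
eventually lie in one such ball. -/

/-- The Archimedean spiral lattice `Γ_{α,θ} = { n^α e^{2πnθi} : n ∈ ℤ, n ≥ 0 }`. -/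
noncomputable def spiralLattice (α θ : ℝ) : Set ℂ :=
  {z : ℂ | ∃ n : ℕ, z = (((n : ℝ) ^ α : ℝ) : ℂ) *
    Complex.exp ((2 * Real.pi * n * θ : ℝ) * Complex.I)}

/-- `Γ` is asymptotically `β`-uniformly discrete. -/
def AsympUniformlyDiscrete (β : ℝ) (Γ : Set ℂ) : Prop :=
  ∃ s > 0, ∀ s₁, 0 < s₁ → s₁ < s → ∃ M > 0, ∀ z : ℂ, M ≤ ‖z‖ →
    {ζ ∈ Γ | 1 ≤ ‖ζ‖ ∧ ‖z - ζ‖ < s₁ * ‖z‖ ^ β}.Subsingleton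

open Real Filter Complex

lemma one_add_pow_le_one_add_two_pow_mul (d : ℕ) {t : ℝ} (ht₀ : 0 ≤ t) (ht₁ : t ≤ 1) :
    (1 + t) ^ d ≤ 1 + (2 ^ d - 1) * t := by
  induction d with
  | zero => simp
  | succ d ih =>
    calc (1 + t) ^ (d + 1) = (1 + t) ^ d * (1 + t) := pow_succ _ _
      _ ≤ (1 + (2 ^ d - 1) * t) * (1 + t) := by gcongr
      _ ≤ 1 + (2 ^ (d + 1) - 1) * t := by
        have h2 : (1 : ℝ) ≤ 2 ^ d := one_le_pow₀ (by norm_num)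
        nlinarith [pow_succ (2 : ℝ) d,
          mul_nonneg (sub_nonneg.2 h2) (mul_nonneg ht₀ (sub_nonneg.2 ht₁))]

lemma one_add_rpow_le_one_add_two_pow_ceil_mul (α : ℝ) {t : ℝ} (ht₀ : 0 ≤ t)
    (ht₁ : t ≤ 1) :
    (1 + t) ^ α ≤ 1 + 2 ^ ⌈α⌉₊ * t :=
  calc (1 + t) ^ α ≤ (1 + t) ^ (⌈α⌉₊ : ℝ) :=
        rpow_le_rpow_of_exponent_le (by linarith) (Nat.le_ceil α)
    _ = (1 + t) ^ ⌈α⌉₊ := rpow_natCast _ _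
    _ ≤ 1 + (2 ^ ⌈α⌉₊ - 1) * t := one_add_pow_le_one_add_two_pow_mul _ ht₀ ht₁
    _ ≤ 1 + 2 ^ ⌈α⌉₊ * t := by linarith

lemma rpow_add_le_mul_one_add (α : ℝ) {x y : ℝ} (hx : 0 < x) (hy₀ : 0 ≤ y)
    (hyx : y ≤ x) :
    (x + y) ^ α ≤ x ^ α * (1 + 2 ^ ⌈α⌉₊ * (y / x)) := by
  have hsplit : x + y = x * (1 + y / x) := by field_simp
  rw [hsplit, mul_rpow hx.le (by positivity)]
  gcongr
  exact one_add_rpow_le_one_add_two_pow_ceil_mul α (by positivity) ((div_le_one hx).2 hyx)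

lemma norm_exp_two_pi_mul_I_sub_one_le (x : ℝ) (j : ℤ) :
    ‖exp ((2 * π * x : ℝ) * I) - 1‖ ≤ 2 * π * |x - j| := by
  have hperiodic : exp ((2 * π * x : ℝ) * I) = exp (I * (2 * π * (x - j) : ℝ)) := by
    rw [← mul_one (exp (I * _)), ← exp_int_mul_two_pi_mul_I j, ← Complex.exp_add]
    push_cast
    ring_nf
  rw [hperiodic]
  refine norm_exp_I_mul_ofReal_sub_one_le.trans_eq ?_
  rw [norm_eq_abs, abs_mul, abs_of_pos two_pi_pos]

lemma norm_ofReal_mul_exp_sub_le (a b u v : ℝ) :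
    ‖(b : ℂ) * exp (v * I) - a * exp (u * I)‖
      ≤ |b - a| + |b| * ‖exp ((v - u : ℝ) * I) - 1‖ := by
  have hfactor : (b : ℂ) * exp (v * I) - a * exp (u * I)
      = exp (u * I) * ((b - a : ℝ) + b * (exp ((v - u : ℝ) * I) - 1)) := by
    push_cast
    rw [sub_mul, Complex.exp_sub]
    field_simp
    ring
  rw [hfactor, norm_mul, norm_exp_ofReal_mul_I, one_mul]
  refine (norm_add_le _ _).trans_eq ?_
  rw [norm_mul, norm_real, norm_real, norm_eq_abs, norm_eq_abs]

noncomputable def spiralPoint (α θ : ℝ) (n : ℕ) : ℂ :=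
  (((n : ℝ) ^ α : ℝ) : ℂ) * exp ((2 * π * n * θ : ℝ) * I)

lemma spiralPoint_mem_spiralLattice (α θ : ℝ) (n : ℕ) :
    spiralPoint α θ n ∈ spiralLattice α θ :=
  ⟨n, rfl⟩

lemma norm_spiralPoint (α θ : ℝ) (n : ℕ) : ‖spiralPoint α θ n‖ = (n : ℝ) ^ α := by
  rw [spiralPoint, norm_mul, norm_exp_ofReal_mul_I, mul_one, norm_real, norm_eq_abs,
    abs_of_nonneg (rpow_nonneg n.cast_nonneg α)]

lemma one_le_norm_spiralPoint {α : ℝ} (hα : 0 ≤ α) (θ : ℝ) {n : ℕ} (hn : 0 < n) :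
    1 ≤ ‖spiralPoint α θ n‖ := by
  rw [norm_spiralPoint]
  exact one_le_rpow (by exact_mod_cast hn) hα

lemma spiralPoint_injective {α : ℝ} (hα : α ≠ 0) (θ : ℝ) :
    Function.Injective (spiralPoint α θ) :=
  fun m n hmn => by
    have hnorm := congrArg norm hmn
    rw [norm_spiralPoint, norm_spiralPoint] at hnorm
    exact_mod_cast
      rpow_left_injOn hα (Nat.cast_nonneg (α := ℝ) m) (Nat.cast_nonneg (α := ℝ) n) hnorm

lemma norm_spiralPoint_add_sub_le (α θ : ℝ) (m q : ℕ) :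
    ‖spiralPoint α θ (m + q) - spiralPoint α θ m‖
      ≤ |((m + q : ℕ) : ℝ) ^ α - (m : ℝ) ^ α|
        + ((m + q : ℕ) : ℝ) ^ α * (2 * π * |q * θ - round (q * θ)|) := by
  have hangle : 2 * π * ((m + q : ℕ) : ℝ) * θ - 2 * π * m * θ = 2 * π * (q * θ) := by
    push_cast
    ring
  refine (norm_ofReal_mul_exp_sub_le _ _ _ _).trans ?_
  rw [abs_of_nonneg (rpow_nonneg (m + q).cast_nonneg α), hangle]
  gcongr
  exact norm_exp_two_pi_mul_I_sub_one_le (q * θ) (round (q * θ))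

lemma exists_spiralPoint_near {α : ℝ} (hα : 0 < α) (θ : ℝ) :
    ∃ K : ℝ, ∀ N : ℕ, 0 < N → ∃ q : ℕ, 0 < q ∧
      ‖spiralPoint α θ (N ^ 2 + q) - spiralPoint α θ (N ^ 2)‖
        ≤ K * (N : ℝ) ^ (2 * α - 1) := by
  set C : ℝ := 2 ^ ⌈α⌉₊
  refine ⟨C + (1 + C) * (2 * π), fun N hN => ?_⟩
  obtain ⟨q, hq, hqN, hqθ⟩ := exists_nat_abs_mul_sub_round_le θ hN
  refine ⟨q, hq, (norm_spiralPoint_add_sub_le α θ _ _).trans ?_⟩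
  have hN₀ : (0 : ℝ) < N := by exact_mod_cast hN
  have hm : ((N ^ 2 : ℕ) : ℝ) = N ^ 2 := Nat.cast_pow N 2
  have hqm : (q : ℝ) / (N ^ 2 : ℕ) ≤ 1 / N := by
    rw [hm, div_le_div_iff₀ (by positivity) hN₀]
    have : (q : ℝ) ≤ N := by exact_mod_cast hqN
    nlinarith
  have hN₁ : 1 / (N : ℝ) ≤ 1 := by
    rw [div_le_one hN₀]
    exact_mod_cast hN
  set a : ℝ := ((N ^ 2 : ℕ) : ℝ) ^ α
  set b : ℝ := ((N ^ 2 + q : ℕ) : ℝ) ^ α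
  have hab : a ≤ b := rpow_le_rpow (by positivity) (by push_cast; linarith) hα.le
  have hb : b ≤ a * (1 + C * (1 / N)) := by
    have hqm' : (q : ℝ) ≤ (N ^ 2 : ℕ) := by
      exact_mod_cast hqN.trans (Nat.le_self_pow two_ne_zero N)
    have := rpow_add_le_mul_one_add α (by positivity) q.cast_nonneg hqm'
    rw [← Nat.cast_add] at this
    exact this.trans (by gcongr)
  have hb' : b ≤ a * (1 + C) :=
    hb.trans (by gcongr; exact mul_le_of_le_one_right (by positivity) hN₁)
  have hθN : 2 * π * |q * θ - round (q * θ)| ≤ 2 * π * (1 / N) := by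
    gcongr
    exact hqθ.trans (one_div_le_one_div_of_le hN₀ (by linarith))
  have ha : a / N = N ^ (2 * α - 1) := by
    rw [rpow_sub_one hN₀.ne', rpow_mul hN₀.le, rpow_two, ← hm]
  calc |b - a| + b * (2 * π * |q * θ - round (q * θ)|)
      ≤ a * C * (1 / N) + a * (1 + C) * (2 * π * (1 / N)) := by
        rw [abs_of_nonneg (sub_nonneg.2 hab)]
        gcongr
        linarith
    _ = (C + (1 + C) * (2 * π)) * (a / N) := by ring
    _ = _ := by rw [ha]

lemma eventually_mul_rpow_lt_mul_rpow {a b : ℝ} (hab : a < b) (K : ℝ) {c : ℝ} (hc : 0 < c) :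
    ∀ᶠ x : ℝ in atTop, K * x ^ a < c * x ^ b := by
  have hlim : Tendsto (fun x : ℝ => K * x ^ (-(b - a))) atTop (nhds 0) := by
    simpa using (tendsto_rpow_neg_atTop (sub_pos.2 hab)).const_mul K
  filter_upwards [hlim.eventually_lt_const hc, eventually_gt_atTop 0] with x hx hx₀
  calc K * x ^ a = K * x ^ (-(b - a)) * x ^ b := by
        rw [mul_assoc, ← rpow_add hx₀]
        ring_nf
    _ < c * x ^ b := by gcongr

theorem uniformly_discrete_implies_exponent_ineq_general (α θ β : ℝ) (hα : 0 < α)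
    (h : AsympUniformlyDiscrete β (spiralLattice α θ)) :
    1 + 2 * α * β ≤ 2 * α := by
  by_contra! hlt
  obtain ⟨s, hs, hdisc⟩ := h
  obtain ⟨M, -, hM⟩ := hdisc (s / 2) (by positivity) (by linarith)
  obtain ⟨K, hK⟩ := exists_spiralPoint_near hα θ
  obtain ⟨N, hN, hMN, hKN⟩ : ∃ N : ℕ, 0 < N ∧ M ≤ (N : ℝ) ^ (2 * α) ∧
      K * (N : ℝ) ^ (2 * α - 1) < s / 2 * (N : ℝ) ^ (2 * α * β) :=
    ((eventually_gt_atTop 0).and (tendsto_natCast_atTop_atTop.eventually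
      (((tendsto_rpow_atTop (by positivity)).eventually_ge_atTop M).and
        (eventually_mul_rpow_lt_mul_rpow (by linarith) K (by positivity))))).exists
  obtain ⟨q, hq, hnear⟩ := hK N hN
  set ζ := spiralPoint α θ (N ^ 2)
  have hζ : ‖ζ‖ = (N : ℝ) ^ (2 * α) := by
    rw [norm_spiralPoint, rpow_mul (Nat.cast_nonneg N), rpow_two, Nat.cast_pow]
  have hζ₁ : 1 ≤ ‖ζ‖ := one_le_norm_spiralPoint hα.le θ (pow_pos hN 2)
  have hradius : 0 < s / 2 * ‖ζ‖ ^ β :=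
    mul_pos (half_pos hs) (rpow_pos_of_pos (by linarith) β)
  have hcollide : ζ = spiralPoint α θ (N ^ 2 + q) := hM ζ (hζ ▸ hMN)
    ⟨spiralPoint_mem_spiralLattice .., hζ₁, by rwa [sub_self, norm_zero]⟩
    ⟨spiralPoint_mem_spiralLattice .., one_le_norm_spiralPoint hα.le θ (by omega), by
      rw [norm_sub_rev, hζ, ← rpow_mul (Nat.cast_nonneg N)]
      exact hnear.trans_lt hKN⟩
  have := spiralPoint_injective hα.ne' θ hcollide
  omega

theorem uniformly_discrete_implies_exponent_ineq (α θ β : ℝ) (hα : 0 < α) (hβ : β < 1)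
    (h : AsympUniformlyDiscrete β (spiralLattice α θ)) :
    1 + 2 * α * β ≤ 2 * α :=
  uniformly_discrete_implies_exponent_ineq_general α θ β hα h
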